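/- The lattice √3 ℤ^{12} embeds as a sublattice of D_{12}^+, and the image of D_{12}^+ / √3 ℤ^{12} in the discriminant group (√3 ℤ^{12})^*/(√3 ℤ^{12}) ≅ 𝔽_3^{12} is a self-orthogonal linear subspace of dimension 6 with no nonzero word of weight less than 6 (hence a copy of the extended ternary Golay code). -/

import Mathlib

/-- The standard dot product on `ℝ^m`. -/
def dot {m : ℕ} (x y : Fin m → ℝ) : ℝ := ∑ i, x i * y i

/-- The lattice `D_m ⊂ ℝ^m`: integer vectors with even coordinate sum. -/
def Dset (m : ℕ) : Set (Fin m → ℝ) :=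
  {x | (∀ i, ∃ k : ℤ, x i = (k : ℝ)) ∧ ∃ k : ℤ, (∑ i, x i) = 2 * (k : ℝ)}

/-- `D_m^+ = D_m ∪ (D_m + (1/2,…,1/2))`. -/
def DplusSet (m : ℕ) : Set (Fin m → ℝ) :=
  Dset m ∪ {x | (x - fun _ => (1:ℝ)/2) ∈ Dset m}

/-!
The halved rows `λ_j = h_j / 2` of a normalized Hadamard matrix `H` of order 12 lie in
`D₁₂⁺` and satisfy `λ_i · λ_j = 3 δ_ij`, so they span a copy of `√3 ℤ¹²`. For such a frame,
`∑_j (x · λ_j)(y · λ_j) = 3 (x · y)`, and `x · y ∈ ℤ` for `x ∈ D₁₂⁺`, `y ∈ D₁₂`; hence the glue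
vector of any `x ∈ D₁₂⁺` is orthogonal mod 3 to the glue vector of any `y ∈ D₁₂`. The six rows
of a generator matrix `G` of the ternary Golay code are glue vectors of explicit vectors of
`D₁₂`, so the glue code contains `span G` and lies in `G^⊥`; as `G` is self-orthogonal of half
length, `G^⊥ = span G`. The minimum weight is checked over the `3⁶` codewords.
-/

open Matrix

section Lattice

variable {m : ℕ}

lemma intCast_mem_Dset {w : Fin m → ℤ} (hw : Even (∑ i, w i)) :
    (fun i => (w i : ℝ)) ∈ Dset m := by
  obtain ⟨k, hk⟩ := hw
  refine ⟨fun i => ⟨w i, rfl⟩, k, ?_⟩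
  rw [← Int.cast_sum, hk]
  push_cast
  ring

lemma half_mem_DplusSet_of_odd {w : Fin m → ℤ} (hodd : ∀ i, Odd (w i))
    (hsum : ∑ i, w i ≡ m [ZMOD 4]) : (fun i => (w i : ℝ) / 2) ∈ DplusSet m := by
  choose k hk using hodd
  obtain ⟨t, ht⟩ := hsum.symm.dvd
  have hk_sum : ∑ i, k i = 2 * t := by
    simp only [hk, Finset.sum_add_distrib, ← Finset.mul_sum, Finset.sum_const, Finset.card_univ,
      Fintype.card_fin, nsmul_eq_mul, mul_one] at ht
    linarith
  have hshift : ∀ i, ((fun i => (w i : ℝ) / 2) - fun _ => (1 : ℝ) / 2 : Fin m → ℝ) i = k i :=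
    fun i => by
      simp only [Pi.sub_apply, hk]
      push_cast
      ring
  right
  refine ⟨fun i => ⟨k i, hshift i⟩, t, ?_⟩
  simp only [hshift]
  exact_mod_cast hk_sum

lemma exists_dot_eq_intCast {x v : Fin m → ℝ} (hx : x ∈ DplusSet m) (hv : v ∈ Dset m) :
    ∃ p : ℤ, dot x v = p := by
  obtain ⟨hv, s, hs⟩ := hv
  choose b hb using hv
  rcases hx with ⟨hx, -⟩ | ⟨hx, -⟩
  · choose a ha using hx
    exact ⟨∑ i, a i * b i, by simp [dot, ha, hb]⟩
  · choose a ha using hx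
    have hx' : ∀ i, x i = a i + 1 / 2 := fun i => by
      rw [← ha i]
      simp
    refine ⟨∑ i, a i * b i + s, ?_⟩
    calc dot x v = ∑ i, (a i : ℝ) * b i + (∑ i, v i) / 2 := by
          simp only [dot, hx', add_mul, Finset.sum_add_distrib, Finset.sum_div, hb]
          congr 1
          exact Finset.sum_congr rfl fun i _ => by ring
      _ = _ := by
          rw [hs]
          push_cast
          ring

def Dlattice (m : ℕ) : AddSubgroup (Fin m → ℝ) where
  carrier := Dset m
  add_mem' := by
    rintro x y ⟨hx, a, ha⟩ ⟨hy, b, hb⟩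
    refine ⟨fun i => ?_, a + b, ?_⟩
    · obtain ⟨p, hp⟩ := hx i
      obtain ⟨q, hq⟩ := hy i
      exact ⟨p + q, by simp [hp, hq]⟩
    · simp only [Pi.add_apply, Finset.sum_add_distrib, ha, hb]
      push_cast
      ring
  zero_mem' := ⟨fun _ => ⟨0, by simp⟩, 0, by simp⟩
  neg_mem' := by
    rintro x ⟨hx, a, ha⟩
    refine ⟨fun i => ?_, -a, ?_⟩
    · obtain ⟨p, hp⟩ := hx i
      exact ⟨-p, by simp [hp]⟩
    · simp only [Pi.neg_apply, Finset.sum_neg_distrib, ha]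
      push_cast
      ring

lemma sum_dot_mul_dot {c : ℝ} (hc : c ≠ 0) {L : Matrix (Fin m) (Fin m) ℝ}
    (hL : L * Lᵀ = c • 1) (x v : Fin m → ℝ) :
    ∑ j, dot x (L j) * dot v (L j) = c * dot x v := by
  have hcol : Lᵀ * L = c • 1 := by
    have hinv : (c⁻¹ • Lᵀ) * L = 1 :=
      mul_eq_one_comm.mp (by rw [Matrix.mul_smul, hL, smul_smul, inv_mul_cancel₀ hc, one_smul])
    rw [← one_smul ℝ (Lᵀ * L), ← mul_inv_cancel₀ hc, mul_smul, ← Matrix.smul_mul, hinv]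
  calc ∑ j, dot x (L j) * dot v (L j) = (L *ᵥ x) ⬝ᵥ (L *ᵥ v) := by
        simp only [dot, dotProduct, mulVec, mul_comm]
    _ = c * dot x v := by
        rw [dotProduct_mulVec, ← vecMul_transpose, vecMul_vecMul, hcol, vecMul_smul, vecMul_one,
          smul_dotProduct, smul_eq_mul]
        rfl

end Lattice

section Glue

variable {m : ℕ} (n : ℕ)

/-- `c` is the class of `x` in the discriminant group `𝔽_n^m` of the lattice spanned by the
frame `lam`, read off in the coordinates `x · lam j mod n`. -/
def IsGlueVector (lam : Fin m → Fin m → ℝ) (x : Fin m → ℝ) (c : Fin m → ZMod n) : Prop :=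
  ∀ j, ∃ k : ℤ, dot x (lam j) = k ∧ (k : ZMod n) = c j

def glueCode (lam : Fin m → Fin m → ℝ) (Λ : AddSubgroup (Fin m → ℝ)) :
    AddSubgroup (Fin m → ZMod n) where
  carrier := {c | ∃ x ∈ Λ, IsGlueVector n lam x c}
  add_mem' := by
    rintro c d ⟨x, hx, hc⟩ ⟨y, hy, hd⟩
    refine ⟨x + y, Λ.add_mem hx hy, fun j => ?_⟩
    obtain ⟨p, hp, hpc⟩ := hc j
    obtain ⟨q, hq, hqd⟩ := hd j
    refine ⟨p + q, ?_, by simp [hpc, hqd]⟩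
    change (x + y) ⬝ᵥ lam j = _
    rw [add_dotProduct]
    exact_mod_cast congrArg₂ (· + ·) hp hq
  zero_mem' := ⟨0, Λ.zero_mem, fun j => ⟨0, by simp [dot], by simp⟩⟩
  neg_mem' := by
    rintro c ⟨x, hx, hc⟩
    refine ⟨-x, Λ.neg_mem hx, fun j => ?_⟩
    obtain ⟨p, hp, hpc⟩ := hc j
    refine ⟨-p, ?_, by simp [hpc]⟩
    change -x ⬝ᵥ lam j = _
    rw [neg_dotProduct]
    exact_mod_cast congrArg Neg.neg hp

variable {n}

theorem IsGlueVector.sum_mul_eq_zero (hn : n ≠ 0) {L : Matrix (Fin m) (Fin m) ℝ}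
    (hL : L * Lᵀ = (n : ℝ) • 1) {x v : Fin m → ℝ} {c d : Fin m → ZMod n}
    (hx : x ∈ DplusSet m) (hv : v ∈ Dset m) (hc : IsGlueVector n L x c)
    (hd : IsGlueVector n L v d) : ∑ j, c j * d j = 0 := by
  choose a ha hac using hc
  choose b hb hbd using hd
  obtain ⟨p, hp⟩ := exists_dot_eq_intCast hx hv
  have hab : ∑ j, a j * b j = n * p := by
    have := sum_dot_mul_dot (Nat.cast_ne_zero.mpr hn) hL x v
    simp only [ha, hb, hp] at this
    exact_mod_cast this
  calc ∑ j, c j * d j = ((∑ j, a j * b j : ℤ) : ZMod n) := by simp [← hac, ← hbd]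
    _ = 0 := by simp [hab]

end Glue

theorem span_row_eq_ker_mulVecLin {K ι ν : Type*} [Field K] [Fintype ι] [Fintype ν]
    {G : Matrix ι ν K} (hG : LinearIndependent K G.row) (hGG : G * Gᵀ = 0)
    (hcard : Fintype.card ν = 2 * Fintype.card ι) :
    Submodule.span K (Set.range G.row) = LinearMap.ker G.mulVecLin := by
  apply Submodule.eq_of_le_of_finrank_le
  · rw [Submodule.span_le]
    rintro _ ⟨k, rfl⟩
    ext i
    simpa [mul_apply, mulVec, dotProduct] using congrFun (congrFun hGG i) k
  · have h := LinearMap.finrank_range_add_finrank_ker G.mulVecLin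
    rw [← rank, hG.rank_matrix, Module.finrank_fintype_fun_eq_card, hcard] at h
    rw [finrank_span_eq_card hG]
    omega

lemma exists_vecMul_eq_of_mem_span_row {R ι ν : Type*} [CommSemiring R] [Fintype ι]
    {M : Matrix ι ν R} {c : ν → R} (hc : c ∈ Submodule.span R (Set.range M.row)) :
    ∃ a, a ᵥ* M = c := by
  rw [← range_vecMulLinear] at hc
  exact hc

def hadamard12 : Matrix (Fin 12) (Fin 12) ℤ :=
  !![1, 1, 1, 1, 1, 1, 1, 1, 1, 1, 1, 1;
     1, -1, 1, -1, 1, 1, 1, -1, -1, -1, 1, -1;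
     1, -1, -1, 1, -1, 1, 1, 1, -1, -1, -1, 1;
     1, 1, -1, -1, 1, -1, 1, 1, 1, -1, -1, -1;
     1, -1, 1, -1, -1, 1, -1, 1, 1, 1, -1, -1;
     1, -1, -1, 1, -1, -1, 1, -1, 1, 1, 1, -1;
     1, -1, -1, -1, 1, -1, -1, 1, -1, 1, 1, 1;
     1, 1, -1, -1, -1, 1, -1, -1, 1, -1, 1, 1;
     1, 1, 1, -1, -1, -1, 1, -1, -1, 1, -1, 1;
     1, 1, 1, 1, -1, -1, -1, 1, -1, -1, 1, -1;
     1, -1, 1, 1, 1, -1, -1, -1, 1, -1, -1, 1;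
     1, 1, -1, 1, 1, 1, -1, -1, -1, 1, -1, -1]

def golayGenerator : Matrix (Fin 6) (Fin 12) (ZMod 3) :=
  !![1, 0, 0, 0, 0, 0, 1, 0, 2, 1, 2, 2;
     0, 1, 0, 0, 0, 0, 1, 2, 2, 2, 1, 0;
     0, 0, 1, 0, 0, 0, 0, 1, 2, 2, 2, 1;
     0, 0, 0, 1, 0, 0, 2, 1, 2, 0, 1, 2;
     0, 0, 0, 0, 1, 0, 1, 1, 0, 1, 1, 1;
     0, 0, 0, 0, 0, 1, 2, 2, 2, 1, 0, 1]

/-- Row `k` lies in `D₁₂` and has glue vector `golayGenerator k`: its frame coordinates are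
`(golayLift * hadamard12ᵀ) k j / 2`, and `2⁻¹ = -1` in `𝔽₃`. -/
def golayLift : Matrix (Fin 6) (Fin 12) ℤ :=
  !![4, 0, 0, 1, 1, 0, 2, 0, 0, 0, 0, 0;
     3, 2, 0, 0, 1, 0, 0, 0, 0, 0, 0, 0;
     3, 0, 2, 0, 0, 1, 0, 0, 0, 0, 0, 0;
     6, 1, 0, 2, 2, 0, 1, 0, 0, 0, 0, 0;
     6, 1, 1, 2, 1, 0, 1, 0, 0, 0, 0, 0;
     6, 0, 1, 0, 2, 2, 1, 0, 0, 0, 0, 0]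

lemma hadamard12_mul_transpose : hadamard12 * hadamard12ᵀ = 12 • 1 := by decide

lemma hadamard12_emod_two : ∀ j i, hadamard12 j i % 2 = 1 := by decide

lemma hadamard12_row_sum : ∀ j, ∑ i, hadamard12 j i ≡ 12 [ZMOD 4] := by decide

lemma golayLift_row_sum_even : ∀ k, Even (∑ i, golayLift k i) := by decide

lemma golayGenerator_eq : golayGenerator = -(golayLift * hadamard12ᵀ).map (↑) := by decide

lemma golayGenerator_mul_transpose : golayGenerator * golayGeneratorᵀ = 0 := by decide

set_option maxRecDepth 100000 in
set_option maxHeartbeats 4000000 in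
lemma hammingNorm_vecMul_golayGenerator :
    ∀ a : Fin 6 → ZMod 3, a ≠ 0 → 6 ≤ hammingNorm (a ᵥ* golayGenerator) := by decide

lemma golayGenerator_linearIndependent : LinearIndependent (ZMod 3) golayGenerator.row := by
  rw [← vecMul_injective_iff]
  refine (injective_iff_map_eq_zero golayGenerator.vecMulLinear).mpr fun a ha => ?_
  by_contra h0
  have h := hammingNorm_vecMul_golayGenerator a h0
  rw [show a ᵥ* golayGenerator = 0 from ha, hammingNorm_zero] at h
  omega

lemma span_golayGenerator_eq_ker :
    Submodule.span (ZMod 3) (Set.range golayGenerator.row) =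
      LinearMap.ker golayGenerator.mulVecLin :=
  span_row_eq_ker_mulVecLin golayGenerator_linearIndependent golayGenerator_mul_transpose rfl

noncomputable def hadamardFrame : Matrix (Fin 12) (Fin 12) ℝ :=
  of fun j i => (hadamard12 j i : ℝ) / 2

lemma hadamardFrame_mem (j : Fin 12) : hadamardFrame j ∈ DplusSet 12 :=
  half_mem_DplusSet_of_odd (fun i => Int.odd_iff.mpr (hadamard12_emod_two j i))
    (hadamard12_row_sum j)

lemma hadamardFrame_mul_transpose : hadamardFrame * hadamardFrameᵀ = (3 : ℝ) • 1 := by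
  ext i j
  have hH : ((∑ k, hadamard12 i k * hadamard12 j k : ℤ) : ℝ) = if i = j then 12 else 0 := by
    have := congrFun (congrFun hadamard12_mul_transpose i) j
    simp only [mul_apply, transpose_apply] at this
    rw [this]
    split_ifs with h <;> simp [h]
  calc (hadamardFrame * hadamardFrameᵀ) i j
      = ((∑ k, hadamard12 i k * hadamard12 j k : ℤ) : ℝ) / 4 := by
        simp only [mul_apply, hadamardFrame, transpose_apply, of_apply]
        push_cast
        rw [Finset.sum_div]
        exact Finset.sum_congr rfl fun k _ => by ring
    _ = ((3 : ℝ) • 1 : Matrix (Fin 12) (Fin 12) ℝ) i j := by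
        rw [hH]
        split_ifs with h <;> norm_num [one_apply, h]

lemma dot_hadamardFrame (i j : Fin 12) :
    dot (hadamardFrame i) (hadamardFrame j) = if i = j then 3 else 0 := by
  simpa [mul_apply, dot, one_apply] using congrFun (congrFun hadamardFrame_mul_transpose i) j

lemma isGlueVector_golayLift (k : Fin 6) :
    IsGlueVector 3 hadamardFrame (fun i => (golayLift k i : ℝ)) (golayGenerator k) := by
  intro j
  obtain ⟨p, hp⟩ := exists_dot_eq_intCast (hadamardFrame_mem j)
    (intCast_mem_Dset (golayLift_row_sum_even k))
  refine ⟨p, (dotProduct_comm _ _).trans hp, ?_⟩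
  have h2 : ∑ i, golayLift k i * hadamard12 j i = 2 * p := by
    have h : ((∑ i, golayLift k i * hadamard12 j i : ℤ) : ℝ) = 2 * p := by
      rw [← hp]
      simp only [dot, hadamardFrame, of_apply]
      push_cast
      rw [Finset.mul_sum]
      exact Finset.sum_congr rfl fun i _ => by ring
    exact_mod_cast h
  have hchar : (3 : ZMod 3) = 0 := rfl
  rw [golayGenerator_eq]
  change (p : ZMod 3) = -(((golayLift * hadamard12ᵀ) k j : ℤ) : ZMod 3)
  rw [mul_apply]
  simp only [transpose_apply, h2]
  push_cast
  linear_combination (p : ZMod 3) * hchar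

lemma span_golayGenerator_le_glueCode :
    Submodule.span (ZMod 3) (Set.range golayGenerator.row) ≤
      AddSubgroup.toZModSubmodule 3 (glueCode 3 hadamardFrame (Dlattice 12)) :=
  Submodule.span_le.mpr <| Set.range_subset_iff.mpr fun k =>
    ⟨_, intCast_mem_Dset (golayLift_row_sum_even k), isGlueVector_golayLift k⟩

/-- `√3 ℤ^{12}` embeds as a sublattice of `D_{12}^+` — i.e. there is an
orthogonal family `λ^1,…,λ^{12} ∈ D_{12}^+` with `λ^i·λ^j = 3δ_{ij}` — and, under the
identification of the discriminant group of `√3ℤ^{12}` with `𝔽_3^{12}` via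
`x ↦ (x·λ_j mod 3)`, the image of `D_{12}^+` is a self-orthogonal linear subspace of
dimension 6 with no nonzero word of weight less than 6 (a copy of the extended
ternary Golay code). -/
theorem stmt_11 :
    ∃ lam : Fin 12 → (Fin 12 → ℝ),
      (∀ i, lam i ∈ DplusSet 12) ∧
      (∀ i j, dot (lam i) (lam j) = if i = j then 3 else 0) ∧
      ∃ M : Submodule (ZMod 3) (Fin 12 → ZMod 3),
        (M : Set (Fin 12 → ZMod 3)) = {c | ∃ x ∈ DplusSet 12,
          ∀ j, ∃ m : ℤ, dot x (lam j) = (m : ℝ) ∧ (m : ZMod 3) = c j} ∧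
        Module.finrank (ZMod 3) M = 6 ∧
        (∀ c ∈ M, ∀ d ∈ M, (∑ i, c i * d i) = 0) ∧
        (∀ c ∈ M, c ≠ 0 → 6 ≤ (Finset.univ.filter fun i => c i ≠ 0).card) := by
  refine ⟨hadamardFrame, hadamardFrame_mem, dot_hadamardFrame,
    Submodule.span (ZMod 3) (Set.range golayGenerator.row), ?_, ?_, ?_, ?_⟩
  · ext c
    constructor
    · intro hc
      obtain ⟨x, hx, hxc⟩ := span_golayGenerator_le_glueCode hc
      exact ⟨x, Or.inl hx, hxc⟩
    · rintro ⟨x, hx, hxc⟩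
      rw [SetLike.mem_coe, span_golayGenerator_eq_ker, LinearMap.mem_ker]
      ext k
      simpa [mulVec, dotProduct, mul_comm] using
        IsGlueVector.sum_mul_eq_zero three_ne_zero (mod_cast hadamardFrame_mul_transpose) hx
          (intCast_mem_Dset (golayLift_row_sum_even k)) hxc (isGlueVector_golayLift k)
  · rw [finrank_span_eq_card golayGenerator_linearIndependent, Fintype.card_fin]
  · intro c hc d hd
    rw [span_golayGenerator_eq_ker, LinearMap.mem_ker] at hd
    obtain ⟨a, rfl⟩ := exists_vecMul_eq_of_mem_span_row hc
    change (a ᵥ* golayGenerator) ⬝ᵥ d = 0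
    rw [← dotProduct_mulVec, ← mulVecLin_apply, hd, dotProduct_zero]
  · intro c hc hc0
    obtain ⟨a, rfl⟩ := exists_vecMul_eq_of_mem_span_row hc
    exact hammingNorm_vecMul_golayGenerator a (by rintro rfl; exact hc0 (zero_vecMul _))
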